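/- arXiv:2508.20434 — 2 statements merged into one kernel-verified Lean document; each statement's English description precedes it below -/
import Mathlib

section
/- Fix finite types A and B. Let V := (A ⊕ B) → ℝ, a finite-dimensional real vector space with standard basis vectors (e_η) for η ∈ A ⊕ B, and let U := (A ⊕ B) → ℝ, regarded as dual to V via the perfect pairing ⟨u, v⟩ := ∑_{η} u(η)·v(η). Fix c : A → ℝ with c(ρ) > 0 for every ρ ∈ A and a : B → A → ℝ with a(Y)(ρ) ≥ 0 for all Y ∈ B, ρ ∈ A. For ρ ∈ A set Ξ_ρ := c(ρ)·e_ρ ∈ V, and for Y ∈ B set Ξ_Y := e_Y + ∑_{ρ ∈ A} a(Y)(ρ)·c(ρ)·e_ρ ∈ V. For ρ ∈ A set Ξ*_ρ := c(ρ)⁻¹·e_ρ − ∑_{Y ∈ B} a(Y)(ρ)·e_Y ∈ U, and for Y ∈ B set Ξ*_Y := e_Y ∈ U. Fix a natural number d and a map w : A → (Fin d → ℝ); let β' : V →ₗ[ℝ] (Fin d → ℝ) be the linear map with β'(e_ρ) = w(ρ) for ρ ∈ A and β'(e_Y) = 0 for Y ∈ B, and for a linear functional m : (Fin d → ℝ)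 →ₗ[ℝ] ℝ let α(m) ∈ U be the element with α(m)(ρ) = m(w(ρ)) for ρ ∈ A and α(m)(Y) = 0 for Y ∈ B. Then the dual cone of the intersection of ker β' with the cone generated by the Ξ_η equals the sum of the image of α and the cone generated by the Ξ*_η: { u ∈ U | ∀ v ∈ V, (β'(v) = 0 and v = ∑_η s(η)·Ξ_η for some s : A ⊕ B → ℝ with s ≥ 0) → ⟨u, v⟩ ≥ 0 } = { α(m) + ∑_{η} t(η)·Ξ*_η | m a linear functional on Fin d → ℝ, t : A ⊕ B → ℝ with t ≥ 0 }. -/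
/-!
Writing `v = ∑ s η • Ξ η`, the coordinates `s` range over all of `ℝ^(A ⊕ B)`, and the `Ξ*_η` form
the dual basis of the `Ξ_η`. In these coordinates the movable cone becomes `ker L ∩ ℝ≥0^(A ⊕ B)`
with `L s = ∑ s η • β' Ξ_η`, and its dual is `range Lᵀ + ℝ≥0^(A ⊕ B)` by Farkas' lemma; pulling
back along the dual basis turns `range Lᵀ` into `range α`. Farkas' lemma itself is Hahn–Banach
separation from a finitely generated cone, which is closed because, by Carathéodory's theorem, it
is a finite union of images of orthants under injective linear maps.
-/

open Finset Matrix

theorem exists_nonneg_sub_smul_card_support_lt {ι : Type*} [Fintype ι] {s f : ι → ℝ}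
    (hs : 0 ≤ s) (hfs : ∀ i, s i = 0 → f i = 0) (hf : ∃ i, f i ≠ 0) :
    ∃ r : ℝ, 0 ≤ s - r • f ∧ #{i | (s - r • f) i ≠ 0} < #{i | s i ≠ 0} := by
  wlog hpos : ∃ i, 0 < f i generalizing f
  · push Not at hpos
    obtain ⟨i, hi⟩ := hf
    obtain ⟨r, hr⟩ := this (f := -f) (fun i hi => by simp [hfs i hi])
      ⟨i, by simpa using hi⟩ ⟨i, by simpa using lt_of_le_of_ne (hpos i) hi⟩
    exact ⟨-r, by simpa using hr⟩
  -- the step `r = min {s i / f i | f i > 0}` keeps `s - r • f` nonnegative and kills one coordinate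
  obtain ⟨i₀, hi₀, hmin⟩ := exists_min_image {i | 0 < f i} (fun i => s i / f i)
    (by simpa [Finset.Nonempty] using hpos)
  rw [mem_filter_univ] at hi₀
  refine ⟨s i₀ / f i₀, fun i => ?_, card_lt_card ?_⟩
  · have hr : 0 ≤ s i₀ / f i₀ := div_nonneg (hs i₀) hi₀.le
    rcases lt_or_ge 0 (f i) with hi | hi
    · have := hmin i (by simpa using hi)
      rw [le_div_iff₀ hi] at this
      simpa using this
    · simpa using (mul_nonpos_of_nonneg_of_nonpos hr hi).trans (hs i)
  · rw [Finset.ssubset_iff_of_subset]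
    · refine ⟨i₀, by simpa using fun h => hi₀.ne' (hfs i₀ h), ?_⟩
      simp [div_mul_cancel₀ _ hi₀.ne']
    · intro i
      simp only [mem_filter_univ, Pi.sub_apply, Pi.smul_apply, smul_eq_mul]
      intro h hsi
      exact h (by simp [hsi, hfs i hsi])

namespace PointedCone

variable {ι E : Type*} [Fintype ι] [AddCommGroup E] [Module ℝ E]

theorem mem_hull_range_iff {g : ι → E} {x : E} :
    x ∈ hull ℝ (Set.range g) ↔ ∃ s : ι → ℝ, 0 ≤ s ∧ ∑ i, s i • g i = x := by
  rw [Submodule.mem_span_range_iff_exists_fun]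
  constructor
  · rintro ⟨s, rfl⟩
    exact ⟨fun i => s i, fun i => (s i).2, rfl⟩
  · rintro ⟨s, hs, rfl⟩
    exact ⟨fun i => ⟨s i, hs i⟩, rfl⟩

/-- Carathéodory's theorem for cones. -/
theorem exists_linearIndepOn_of_mem_hull_range {g : ι → E} {x : E}
    (hx : x ∈ hull ℝ (Set.range g)) :
    ∃ T : Finset ι, LinearIndepOn ℝ g T ∧ x ∈ hull ℝ (Set.range fun i : T => g i) := by
  -- a representation of `x` with fewest nonzero coefficients uses an independent subfamily
  obtain ⟨s, ⟨hs, hsx⟩, hmin⟩ := (measure fun s : ι → ℝ => #{i | s i ≠ 0}).wf.has_min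
    {s | 0 ≤ s ∧ ∑ i, s i • g i = x} (mem_hull_range_iff.1 hx)
  refine ⟨({i | s i ≠ 0} : Finset ι), ?_, mem_hull_range_iff.2 ⟨fun i => s i, fun i => hs i, ?_⟩⟩
  · by_contra hdep
    obtain ⟨f, hf, i₀, hi₀, hfi₀⟩ := not_linearIndepOn_finset_iff.1 hdep
    set f' : ι → ℝ := fun i => if s i ≠ 0 then f i else 0
    obtain ⟨r, hr, hcard⟩ := exists_nonneg_sub_smul_card_support_lt (f := f') hs
      (fun i hi => by simp [f', hi]) ⟨i₀, by simpa [f', (mem_filter_univ _).1 hi₀] using hfi₀⟩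
    refine hmin _ ⟨hr, ?_⟩ hcard
    have hf' : ∑ i, f' i • g i = 0 := by
      simpa [f', ite_smul, Finset.sum_ite, Finset.filter_ne'] using hf
    simp [sub_smul, Finset.sum_sub_distrib, mul_smul, ← Finset.smul_sum, hf', hsx]
  · rw [Finset.sum_coe_sort {i | s i ≠ 0} (fun i => s i • g i), ← hsx]
    exact Finset.sum_filter_of_ne fun i _ h => left_ne_zero_of_smul h

variable [TopologicalSpace E] [IsTopologicalAddGroup E] [ContinuousSMul ℝ E] [T2Space E]

theorem isClosed_hull_range_of_linearIndependent {g : ι → E} (hg : LinearIndependent ℝ g) :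
    IsClosed (hull ℝ (Set.range g) : Set E) := by
  have himage : (hull ℝ (Set.range g) : Set E) = Fintype.linearCombination ℝ g '' Set.Ici 0 := by
    ext x
    simp [mem_hull_range_iff, Fintype.linearCombination_apply]
  rw [himage]
  exact (LinearMap.isClosedEmbedding_of_injective
    (LinearMap.ker_eq_bot.2 hg.fintypeLinearCombination_injective)).isClosedMap _ isClosed_Ici

theorem isClosed_hull_range (g : ι → E) : IsClosed (hull ℝ (Set.range g) : Set E) := by
  have hunion : (hull ℝ (Set.range g) : Set E) =
      ⋃ T ∈ {T : Finset ι | LinearIndepOn ℝ g T}, hull ℝ (Set.range fun i : T => g i) := by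
    refine subset_antisymm (fun x hx => ?_) (Set.iUnion₂_subset fun T _ => ?_)
    · obtain ⟨T, hT, hxT⟩ := exists_linearIndepOn_of_mem_hull_range hx
      exact Set.mem_biUnion hT hxT
    · exact Submodule.span_mono (Set.range_comp_subset_range _ g)
  rw [hunion]
  exact (Set.toFinite _).isClosed_biUnion fun T hT => isClosed_hull_range_of_linearIndependent hT

variable [LocallyConvexSpace ℝ E]

/-- Farkas' lemma for a finitely generated cone. -/
theorem mem_hull_range_iff_forall_dual {g : ι → E} {x : E} :
    x ∈ hull ℝ (Set.range g) ↔ ∀ f : StrongDual ℝ E, (∀ i, 0 ≤ f (g i)) → 0 ≤ f x := by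
  constructor
  · rintro hx f hf
    obtain ⟨s, hs, rfl⟩ := mem_hull_range_iff.1 hx
    simpa using Finset.sum_nonneg fun i _ => mul_nonneg (hs i) (hf i)
  · intro h
    by_contra hx
    obtain ⟨f, hf, hfx⟩ := ProperCone.hyperplane_separation_point
      ⟨hull ℝ (Set.range g), isClosed_hull_range g⟩ hx
    exact hfx.not_ge (h f fun i => hf _ (subset_hull (Set.mem_range_self i)))

end PointedCone

theorem LinearMap.apply_eq_single_dotProduct {R n : Type*} [CommSemiring R] [Fintype n]
    [DecidableEq n] (φ : (n → R) →ₗ[R] R) (v : n → R) :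
    φ v = (fun i => φ (Pi.single i 1)) ⬝ᵥ v := by
  conv_lhs => rw [← Finset.univ_sum_single v]
  refine (map_sum φ _ _).trans (Finset.sum_congr rfl fun i _ => ?_)
  rw [mul_comm, ← smul_eq_mul, ← map_smul, ← Pi.single_smul, smul_eq_mul, mul_one]

theorem exists_linearMap_add_nonneg_of_dotProduct_nonneg {ι κ : Type*} [Fintype ι] [Fintype κ]
    (x : ι → κ → ℝ) (u : ι → ℝ)
    (h : ∀ s : ι → ℝ, 0 ≤ s → ∑ i, s i • x i = 0 → 0 ≤ s ⬝ᵥ u) :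
    ∃ (m : (κ → ℝ) →ₗ[ℝ] ℝ) (t : ι → ℝ), 0 ≤ t ∧ ∀ i, u i = m (x i) + t i := by
  classical
  -- `u` lies in the cone spanned by `± (x · k)` and the unit vectors; Farkas reduces this to `h`
  set g : (κ ⊕ κ) ⊕ ι → ι → ℝ :=
    Sum.elim (Sum.elim (fun k i => x i k) (fun k i => -x i k)) (fun i => Pi.single i 1)
  have hu : u ∈ PointedCone.hull ℝ (Set.range g) := by
    refine PointedCone.mem_hull_range_iff_forall_dual.2 fun f hf => ?_
    set y : ι → ℝ := fun i => f (Pi.single i 1)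
    have hfy (v : ι → ℝ) : f v = y ⬝ᵥ v := (f : (ι → ℝ) →ₗ[ℝ] ℝ).apply_eq_single_dotProduct v
    have hy : 0 ≤ y := fun i => hf (.inr i)
    have hxy : ∑ i, y i • x i = 0 := by
      ext k
      have hpos := hf (.inl (.inl k))
      have hneg := hf (.inl (.inr k))
      simp only [g, Sum.elim_inl, Sum.elim_inr, hfy, dotProduct, mul_neg, Finset.sum_neg_distrib,
        neg_nonneg] at hpos hneg
      simpa only [Finset.sum_apply, Pi.smul_apply, smul_eq_mul, Pi.zero_apply]
        using le_antisymm hneg hpos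
    rw [hfy]
    exact h y hy hxy
  obtain ⟨s, hs, rfl⟩ := PointedCone.mem_hull_range_iff.1 hu
  refine ⟨∑ k, (s (.inl (.inl k)) - s (.inl (.inr k))) • LinearMap.proj k,
    fun i => s (.inr i), fun i => hs _, fun i => ?_⟩
  simp [g, Fintype.sum_sum_type, Pi.single_apply, sub_mul, ← sub_eq_add_neg]

theorem sum_dotProduct_smul_eq_self_of_dual {R n : Type*} [CommRing R] [Fintype n] [DecidableEq n]
    {e f : n → n → R} (hef : ∀ i j, f i ⬝ᵥ e j = if i = j then 1 else 0) (z : n → R) :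
    ∑ i, (z ⬝ᵥ e i) • f i = z := by
  have hFE : of f * (of e)ᵀ = 1 := by
    ext i j
    simpa [mul_apply, one_apply, dotProduct] using hef i j
  calc ∑ i, (z ⬝ᵥ e i) • f i = z ᵥ* (of e)ᵀ ᵥ* of f := by
        ext j
        simp [vecMul, dotProduct, Finset.sum_apply]
    _ = z := by rw [vecMul_vecMul, mul_eq_one_comm.1 hFE, vecMul_one]

theorem dual_ker_inf_cone_eq {n κ : Type*} [Fintype n] [DecidableEq n] [Fintype κ]
    {e f : n → n → ℝ} (hef : ∀ i j, f i ⬝ᵥ e j = if i = j then 1 else 0)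
    (β : (n → ℝ) →ₗ[ℝ] (κ → ℝ)) (α : ((κ → ℝ) →ₗ[ℝ] ℝ) → (n → ℝ))
    (hα : ∀ m v, α m ⬝ᵥ v = m (β v)) :
    {u : n → ℝ | ∀ v, (β v = 0 ∧ ∃ s : n → ℝ, (∀ i, 0 ≤ s i) ∧ v = ∑ i, s i • e i) →
        0 ≤ u ⬝ᵥ v} =
      {u | ∃ (m : (κ → ℝ) →ₗ[ℝ] ℝ) (t : n → ℝ), (∀ i, 0 ≤ t i) ∧ u = α m + ∑ i, t i • f i} := by
  ext u
  constructor
  · intro hu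
    obtain ⟨m, t, ht, hut⟩ := exists_linearMap_add_nonneg_of_dotProduct_nonneg
      (fun i => β (e i)) (fun i => u ⬝ᵥ e i) fun s hs hs0 => by
        show 0 ≤ ∑ i, s i * (u ⬝ᵥ e i)
        simpa only [dotProduct_sum, dotProduct_smul, smul_eq_mul] using
          hu (∑ i, s i • e i) ⟨by simpa [map_sum] using hs0, s, hs, rfl⟩
    refine ⟨m, t, ht, ?_⟩
    calc u = ∑ i, (u ⬝ᵥ e i) • f i := (sum_dotProduct_smul_eq_self_of_dual hef u).symm
      _ = ∑ i, (α m ⬝ᵥ e i) • f i + ∑ i, t i • f i := by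
        simp [hut, hα, add_smul, Finset.sum_add_distrib]
      _ = α m + ∑ i, t i • f i := by rw [sum_dotProduct_smul_eq_self_of_dual hef]
  · rintro ⟨m, t, ht, rfl⟩ v ⟨hv, s, hs, rfl⟩
    have hpair : (α m + ∑ i, t i • f i) ⬝ᵥ ∑ j, s j • e j = ∑ i, t i * s i := by
      rw [add_dotProduct, hα, hv, map_zero, zero_add]
      simp [sum_dotProduct, dotProduct_sum, hef, mul_comm]
    rw [hpair]
    exact Finset.sum_nonneg fun i _ => mul_nonneg (ht i) (hs i)

section SplitToricStack

/-! `xi c a η` and `xiStar c a η` are the vectors `Ξ_η` and `Ξ*_η` of the paper. -/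

variable {A B : Type*} [Fintype A] [Fintype B] [DecidableEq A] [DecidableEq B]

def xi (c : A → ℝ) (a : B → A → ℝ) : A ⊕ B → (A ⊕ B) → ℝ
  | .inl ρ => c ρ • Pi.single (.inl ρ) 1
  | .inr Y => Pi.single (.inr Y) 1 + ∑ ρ, (a Y ρ * c ρ) • Pi.single (.inl ρ) 1

noncomputable def xiStar (c : A → ℝ) (a : B → A → ℝ) : A ⊕ B → (A ⊕ B) → ℝ
  | .inl ρ => (c ρ)⁻¹ • Pi.single (.inl ρ) 1 - ∑ Y, a Y ρ • Pi.single (.inr Y) 1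
  | .inr Y => Pi.single (.inr Y) 1

theorem xiStar_dotProduct_xi {c : A → ℝ} (hc : ∀ ρ, c ρ ≠ 0) (a : B → A → ℝ) (η η' : A ⊕ B) :
    xiStar c a η ⬝ᵥ xi c a η' = if η = η' then 1 else 0 := by
  rcases η with ρ | Y <;> rcases η' with ρ' | Y'
  · by_cases h : ρ = ρ' <;> simp [xi, xiStar, h, hc]
  · simp [xi, xiStar, dotProduct_sum, Pi.single_apply, hc]
  · simp [xi, xiStar]
  · by_cases h : Y = Y' <;> simp [xi, xiStar, h, dotProduct_sum]

end SplitToricStack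

theorem dual_cone_of_movable_cone_general
    {A B : Type*} [Fintype A] [Fintype B] [DecidableEq A] [DecidableEq B]
    (c : A → ℝ) (hc : ∀ ρ : A, 0 < c ρ)
    (a : B → A → ℝ)
    (Ξ : A ⊕ B → ((A ⊕ B) → ℝ))
    (hΞA : ∀ ρ : A, Ξ (Sum.inl ρ) = c ρ • (Pi.single (Sum.inl ρ) 1 : (A ⊕ B) → ℝ))
    (hΞB : ∀ Y : B, Ξ (Sum.inr Y) =
      (Pi.single (Sum.inr Y) 1 : (A ⊕ B) → ℝ)
        + ∑ ρ : A, (a Y ρ * c ρ) • (Pi.single (Sum.inl ρ) 1 : (A ⊕ B) → ℝ))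
    (Ξs : A ⊕ B → ((A ⊕ B) → ℝ))
    (hΞsA : ∀ ρ : A, Ξs (Sum.inl ρ) =
      (c ρ)⁻¹ • (Pi.single (Sum.inl ρ) 1 : (A ⊕ B) → ℝ)
        - ∑ Y : B, a Y ρ • (Pi.single (Sum.inr Y) 1 : (A ⊕ B) → ℝ))
    (hΞsB : ∀ Y : B, Ξs (Sum.inr Y) = (Pi.single (Sum.inr Y) 1 : (A ⊕ B) → ℝ))
    (d : ℕ) (w : A → (Fin d → ℝ))
    (β' : ((A ⊕ B) → ℝ) →ₗ[ℝ] (Fin d → ℝ))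
    (hβA : ∀ ρ : A, β' (Pi.single (Sum.inl ρ) 1) = w ρ)
    (hβB : ∀ Y : B, β' (Pi.single (Sum.inr Y) 1) = 0)
    (α : ((Fin d → ℝ) →ₗ[ℝ] ℝ) → ((A ⊕ B) → ℝ))
    (hαA : ∀ (m : (Fin d → ℝ) →ₗ[ℝ] ℝ) (ρ : A), α m (Sum.inl ρ) = m (w ρ))
    (hαB : ∀ (m : (Fin d → ℝ) →ₗ[ℝ] ℝ) (Y : B), α m (Sum.inr Y) = 0) :
    {u : (A ⊕ B) → ℝ | ∀ v : (A ⊕ B) → ℝ,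
        (β' v = 0 ∧ ∃ s : A ⊕ B → ℝ, (∀ η : A ⊕ B, 0 ≤ s η) ∧ v = ∑ η : A ⊕ B, s η • Ξ η)
          → 0 ≤ ∑ x : A ⊕ B, u x * v x}
      = {u : (A ⊕ B) → ℝ |
          ∃ (m : (Fin d → ℝ) →ₗ[ℝ] ℝ) (t : A ⊕ B → ℝ),
            (∀ η : A ⊕ B, 0 ≤ t η) ∧ u = α m + ∑ η : A ⊕ B, t η • Ξs η} := by
  obtain rfl : Ξ = xi c a := funext fun η => by cases η <;> simp [xi, hΞA, hΞB]
  obtain rfl : Ξs = xiStar c a := funext fun η => by cases η <;> simp [xiStar, hΞsA, hΞsB]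
  have hα (m : (Fin d → ℝ) →ₗ[ℝ] ℝ) (v : (A ⊕ B) → ℝ) : α m ⬝ᵥ v = m (β' v) := by
    have hαm : α m = fun η => (m ∘ₗ β') (Pi.single η 1) := by
      funext η
      cases η <;> simp [hαA, hαB, hβA, hβB]
    rw [hαm, ← LinearMap.apply_eq_single_dotProduct, LinearMap.comp_apply]
  exact dual_ker_inf_cone_eq (xiStar_dotProduct_xi (fun ρ => (hc ρ).ne') a) β' α hα

/-- The dual cone of `Ker β'_orb ∩ ∑_η ℝ_{≥0} Ξ_η` (the orbifold movable cone of
curves) equals `Im(α_orb) + ∑_η ℝ_{≥0} Ξ*_η`; this is the linear-algebraic content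
of the description of the orbifold pseudo-effective cone of a split toric stack. -/
theorem dual_cone_of_movable_cone
    {A B : Type*} [Fintype A] [Fintype B] [DecidableEq A] [DecidableEq B]
    (c : A → ℝ) (hc : ∀ ρ : A, 0 < c ρ)
    (a : B → A → ℝ) (ha : ∀ (Y : B) (ρ : A), 0 ≤ a Y ρ)
    (Ξ : A ⊕ B → ((A ⊕ B) → ℝ))
    (hΞA : ∀ ρ : A, Ξ (Sum.inl ρ) = c ρ • (Pi.single (Sum.inl ρ) 1 : (A ⊕ B) → ℝ))
    (hΞB : ∀ Y : B, Ξ (Sum.inr Y) =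
      (Pi.single (Sum.inr Y) 1 : (A ⊕ B) → ℝ)
        + ∑ ρ : A, (a Y ρ * c ρ) • (Pi.single (Sum.inl ρ) 1 : (A ⊕ B) → ℝ))
    (Ξs : A ⊕ B → ((A ⊕ B) → ℝ))
    (hΞsA : ∀ ρ : A, Ξs (Sum.inl ρ) =
      (c ρ)⁻¹ • (Pi.single (Sum.inl ρ) 1 : (A ⊕ B) → ℝ)
        - ∑ Y : B, a Y ρ • (Pi.single (Sum.inr Y) 1 : (A ⊕ B) → ℝ))
    (hΞsB : ∀ Y : B, Ξs (Sum.inr Y) = (Pi.single (Sum.inr Y) 1 : (A ⊕ B) → ℝ))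
    (d : ℕ) (w : A → (Fin d → ℝ))
    (β' : ((A ⊕ B) → ℝ) →ₗ[ℝ] (Fin d → ℝ))
    (hβA : ∀ ρ : A, β' (Pi.single (Sum.inl ρ) 1) = w ρ)
    (hβB : ∀ Y : B, β' (Pi.single (Sum.inr Y) 1) = 0)
    (α : ((Fin d → ℝ) →ₗ[ℝ] ℝ) → ((A ⊕ B) → ℝ))
    (hαA : ∀ (m : (Fin d → ℝ) →ₗ[ℝ] ℝ) (ρ : A), α m (Sum.inl ρ) = m (w ρ))
    (hαB : ∀ (m : (Fin d → ℝ) →ₗ[ℝ] ℝ) (Y : B), α m (Sum.inr Y) = 0) :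
    {u : (A ⊕ B) → ℝ | ∀ v : (A ⊕ B) → ℝ,
        (β' v = 0 ∧ ∃ s : A ⊕ B → ℝ, (∀ η : A ⊕ B, 0 ≤ s η) ∧ v = ∑ η : A ⊕ B, s η • Ξ η)
          → 0 ≤ ∑ x : A ⊕ B, u x * v x}
      = {u : (A ⊕ B) → ℝ |
          ∃ (m : (Fin d → ℝ) →ₗ[ℝ] ℝ) (t : A ⊕ B → ℝ),
            (∀ η : A ⊕ B, 0 ≤ t η) ∧ u = α m + ∑ η : A ⊕ B, t η • Ξs η} :=
  dual_cone_of_movable_cone_general c hc a Ξ hΞA hΞB Ξs hΞsA hΞsB d w β' hβA hβB α hαA hαB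
end

section
/- Let k be an algebraically closed field of characteristic zero, r ≥ 1, λ : Fin r → k an injective map with λ(i) ≠ 0 for all i, and b : Fin r → ℤ with ∑_i b(i) = 0. In the field of rational functions RatFunc k, set f := ∏_{i} (X − C(λ i))^(b i), where integer powers are taken in the field RatFunc k. Then f is nonzero, its numerator and denominator have the same degree and the same leading coefficient: f.intDegree = 0 (equivalently, f.num.natDegree = f.denom.natDegree) and f.num.leadingCoeff = f.denom.leadingCoeff (indeed both f.num and f.denom are monic). -/
/-! Distinct linear factors are pairwise coprime, so `∏ (X - λᵢ)^{bᵢ}` is already in lowest terms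
as `∏ (X - λᵢ)^{bᵢ⁺} / ∏ (X - λᵢ)^{bᵢ⁻}`: numerator and denominator are monic, of degrees
`∑ bᵢ⁺` and `∑ bᵢ⁻`, which agree because `∑ bᵢ = 0`. -/

open Polynomial Function

theorem zpow_eq_pow_toNat_div_pow_neg_toNat {G : Type*} [DivisionMonoid G] (x : G) (n : ℤ) :
    x ^ n = x ^ n.toNat / x ^ (-n).toNat := by
  obtain ⟨m, rfl | rfl⟩ := Int.eq_nat_or_neg n
  · simp
  · simp [zpow_neg]

theorem Finset.prod_zpow_eq_div {ι M : Type*} [DivisionCommMonoid M] (s : Finset ι)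
    (x : ι → M) (n : ι → ℤ) :
    ∏ i ∈ s, x i ^ n i = (∏ i ∈ s, x i ^ (n i).toNat) / ∏ i ∈ s, x i ^ (-n i).toNat := by
  rw [← Finset.prod_div_distrib]
  exact Finset.prod_congr rfl fun i _ => zpow_eq_pow_toNat_div_pow_neg_toNat _ _

theorem Finset.sum_toNat_eq_sum_neg_toNat {ι : Type*} {s : Finset ι} {n : ι → ℤ}
    (hn : ∑ i ∈ s, n i = 0) : ∑ i ∈ s, (n i).toNat = ∑ i ∈ s, (-n i).toNat := by
  have : ∑ i ∈ s, ((n i).toNat - (-n i).toNat : ℤ) = 0 := by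
    simpa only [Int.toNat_sub_toNat_neg] using hn
  rw [Finset.sum_sub_distrib, sub_eq_zero] at this
  exact_mod_cast this

theorem isCoprime_prod_pow_toNat_prod_pow_neg_toNat {R ι : Type*} [CommSemiring R]
    {p : ι → R} (hp : Pairwise (IsCoprime on p)) (s : Finset ι) (n : ι → ℤ) :
    IsCoprime (∏ i ∈ s, p i ^ (n i).toNat) (∏ i ∈ s, p i ^ (-n i).toNat) := by
  refine IsCoprime.prod_left fun i _ => IsCoprime.prod_right fun j _ => ?_
  rcases eq_or_ne i j with rfl | hij
  · -- one of the two exponents vanishes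
    rcases le_total (n i) 0 with h | h
    · simp [Int.toNat_of_nonpos h, isCoprime_one_left]
    · simp [Int.toNat_of_nonpos (neg_nonpos.2 h), isCoprime_one_right]
  · exact (hp hij).pow

namespace RatFunc

variable {K : Type*} [Field K]

theorem denom_div_eq_of_isCoprime {p q : K[X]} (hq : q.Monic) (hpq : IsCoprime p q) :
    (algebraMap K[X] K⟮X⟯ p / algebraMap K[X] K⟮X⟯ q).denom = q := by
  set f := algebraMap K[X] K⟮X⟯ p / algebraMap K[X] K⟮X⟯ q
  have key : f.num * q = p * f.denom := (num_mul_eq_mul_denom_iff hq.ne_zero).2 rfl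
  refine eq_of_monic_of_associated (monic_denom f) hq (associated_of_dvd_dvd ?_ ?_)
  · exact (isCoprime_num_denom f).symm.dvd_of_dvd_mul_left ⟨p, by rw [key, mul_comm]⟩
  · exact hpq.symm.dvd_of_dvd_mul_left ⟨f.num, by rw [← key, mul_comm]⟩

theorem num_div_eq_of_isCoprime {p q : K[X]} (hq : q.Monic) (hpq : IsCoprime p q) :
    (algebraMap K[X] K⟮X⟯ p / algebraMap K[X] K⟮X⟯ q).num = p := by
  have key : _ * q = p * _ := (num_mul_eq_mul_denom_iff hq.ne_zero).2 rfl
  rw [denom_div_eq_of_isCoprime hq hpq] at key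
  exact mul_right_cancel₀ hq.ne_zero key

theorem intDegree_eq_zero_iff {x : K⟮X⟯} :
    x.intDegree = 0 ↔ x.num.natDegree = x.denom.natDegree := by
  rw [intDegree, sub_eq_zero, Nat.cast_inj]

section prod_zpow

variable {ι : Type*} {p : ι → K[X]}

theorem num_prod_zpow (hmonic : ∀ i, (p i).Monic) (hp : Pairwise (IsCoprime on p))
    (s : Finset ι) (n : ι → ℤ) :
    (∏ i ∈ s, algebraMap K[X] K⟮X⟯ (p i) ^ n i).num = ∏ i ∈ s, p i ^ (n i).toNat := by
  rw [Finset.prod_zpow_eq_div]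
  simp only [← map_pow, ← map_prod]
  exact num_div_eq_of_isCoprime (monic_prod_of_monic _ _ fun i _ => (hmonic i).pow _)
    (isCoprime_prod_pow_toNat_prod_pow_neg_toNat hp s n)

theorem denom_prod_zpow (hmonic : ∀ i, (p i).Monic) (hp : Pairwise (IsCoprime on p))
    (s : Finset ι) (n : ι → ℤ) :
    (∏ i ∈ s, algebraMap K[X] K⟮X⟯ (p i) ^ n i).denom = ∏ i ∈ s, p i ^ (-n i).toNat := by
  rw [Finset.prod_zpow_eq_div]
  simp only [← map_pow, ← map_prod]
  exact denom_div_eq_of_isCoprime (monic_prod_of_monic _ _ fun i _ => (hmonic i).pow _)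
    (isCoprime_prod_pow_toNat_prod_pow_neg_toNat hp s n)

end prod_zpow

end RatFunc

theorem Polynomial.natDegree_prod_X_sub_C_pow {R ι : Type*} [CommRing R] [Nontrivial R]
    (s : Finset ι) (a : ι → R) (m : ι → ℕ) :
    (∏ i ∈ s, (X - C (a i)) ^ m i).natDegree = ∑ i ∈ s, m i := by
  rw [natDegree_prod_of_monic _ _ fun i _ => (monic_X_sub_C _).pow _]
  exact Finset.sum_congr rfl fun i _ => by
    rw [(monic_X_sub_C _).natDegree_pow, natDegree_X_sub_C, mul_one]

theorem prod_zpow_at_infinity_general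
    (k : Type*) [Field k]
    (r : ℕ)
    (lam : Fin r → k) (hinj : Function.Injective lam)
    (b : Fin r → ℤ) (hb : ∑ i, b i = 0) :
    (∏ i, (RatFunc.X - RatFunc.C (lam i)) ^ (b i)) ≠ 0
    ∧ (∏ i, (RatFunc.X - RatFunc.C (lam i)) ^ (b i)).intDegree = 0
    ∧ (∏ i, (RatFunc.X - RatFunc.C (lam i)) ^ (b i)).num.natDegree
        = (∏ i, (RatFunc.X - RatFunc.C (lam i)) ^ (b i)).denom.natDegree
    ∧ (∏ i, (RatFunc.X - RatFunc.C (lam i)) ^ (b i)).num.leadingCoeff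
        = (∏ i, (RatFunc.X - RatFunc.C (lam i)) ^ (b i)).denom.leadingCoeff
    ∧ (∏ i, (RatFunc.X - RatFunc.C (lam i)) ^ (b i)).num.Monic
    ∧ (∏ i, (RatFunc.X - RatFunc.C (lam i)) ^ (b i)).denom.Monic := by
  have hf : ∏ i, (RatFunc.X - RatFunc.C (lam i)) ^ b i
      = ∏ i, algebraMap k[X] (RatFunc k) (X - C (lam i)) ^ b i := by
    simp only [map_sub, RatFunc.algebraMap_X, RatFunc.algebraMap_C]
  rw [hf]
  set f := ∏ i, algebraMap k[X] (RatFunc k) (X - C (lam i)) ^ b i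
  have hmonic (i : Fin r) : (X - C (lam i)).Monic := monic_X_sub_C _
  have hnum := RatFunc.num_prod_zpow hmonic (pairwise_coprime_X_sub_C hinj) Finset.univ b
  have hdenom := RatFunc.denom_prod_zpow hmonic (pairwise_coprime_X_sub_C hinj) Finset.univ b
  have hnum_monic : f.num.Monic := hnum ▸ monic_prod_of_monic _ _ fun i _ => (hmonic i).pow _
  have hdenom_monic : f.denom.Monic := RatFunc.monic_denom f
  have hdeg : f.num.natDegree = f.denom.natDegree := by
    rw [hnum, hdenom, natDegree_prod_X_sub_C_pow, natDegree_prod_X_sub_C_pow,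
      Finset.sum_toNat_eq_sum_neg_toNat hb]
  exact ⟨fun h => hnum_monic.ne_zero (RatFunc.num_eq_zero_iff.2 h),
    RatFunc.intDegree_eq_zero_iff.2 hdeg, hdeg,
    by rw [hnum_monic.leadingCoeff, hdenom_monic.leadingCoeff], hnum_monic, hdenom_monic⟩

/-- For distinct nonzero `λ_i` and integers `b_i` with `∑ b_i = 0`, the rational
function `∏_i (X - λ_i)^{b_i}` is nonzero, has `intDegree` zero, its numerator and
denominator have the same degree and the same leading coefficient (both are monic).
This is Claim 1 in the proof of the main theorem: the curve
`z ↦ ∏_i φ_{b_i}(z - λ_i)` extends over `z = ∞` with value the identity of the torus. -/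
theorem prod_zpow_at_infinity
    (k : Type*) [Field k] [IsAlgClosed k] [CharZero k]
    (r : ℕ) (hr : 1 ≤ r)
    (lam : Fin r → k) (hinj : Function.Injective lam) (hne : ∀ i, lam i ≠ 0)
    (b : Fin r → ℤ) (hb : ∑ i, b i = 0) :
    (∏ i, (RatFunc.X - RatFunc.C (lam i)) ^ (b i)) ≠ 0
    ∧ (∏ i, (RatFunc.X - RatFunc.C (lam i)) ^ (b i)).intDegree = 0
    ∧ (∏ i, (RatFunc.X - RatFunc.C (lam i)) ^ (b i)).num.natDegree
        = (∏ i, (RatFunc.X - RatFunc.C (lam i)) ^ (b i)).denom.natDegree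
    ∧ (∏ i, (RatFunc.X - RatFunc.C (lam i)) ^ (b i)).num.leadingCoeff
        = (∏ i, (RatFunc.X - RatFunc.C (lam i)) ^ (b i)).denom.leadingCoeff
    ∧ (∏ i, (RatFunc.X - RatFunc.C (lam i)) ^ (b i)).num.Monic
    ∧ (∏ i, (RatFunc.X - RatFunc.C (lam i)) ^ (b i)).denom.Monic :=
  prod_zpow_at_infinity_general k r lam hinj b hb
end
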